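/- Let u, w be permutations in S_m, let 1 <= i < m with w(i) < w(i+1), and let b_1,...,b_m be independent variables. Writing b_v for the list (b_{v(1)},...,b_{v(m)}) and b for (b_1,...,b_m), one has (b_{u(i+1)} - b_{u(i)}) * S_w(b_u; b) = S_{w s_i}(b_{u s_i}; b) - S_{w s_i}(b_u; b). -/

import Mathlib

open MvPolynomial

/-! Common setup.  Dots in columns, positions in permutations, and variable
indices are all 0-indexed: dot `q` (0-indexed) of column `i` is dot `q+1`
(1-indexed) in the paper, the variable `(i, j) : ℕ × ℕ` is the Chern root
`x^i_{j+1}`, and in the Schubert variable type `ℕ ⊕ ℕ`, `Sum.inl a` is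
`x_{a+1}` and `Sum.inr b` is `y_{b+1}`. -/

/-- Coxeter length = number of inversions of a (finitely supported) permutation of ℕ. -/
noncomputable def ell (w : Equiv.Perm ℕ) : ℕ :=
  {p : ℕ × ℕ | p.1 < p.2 ∧ w p.2 < w p.1}.ncard

/-- A finitely supported permutation of ℕ. -/
def FinSupp (w : Equiv.Perm ℕ) : Prop := {x | w x ≠ x}.Finite

/-- A lace diagram for the dimension vector `e 0, …, e n`, encoded as a sequence
`w 1, …, w n` of finitely supported permutations of ℕ (normalized so that
`w i = 1` outside `1 ≤ i ≤ n`): all descent positions of `w i` are `< e i` and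
all descent positions of `(w i)⁻¹` are `< e (i-1)` (0-indexed positions). -/
def IsLace (n : ℕ) (e : ℕ → ℕ) (w : ℕ → Equiv.Perm ℕ) : Prop :=
  (∀ i, i = 0 ∨ n < i → w i = 1) ∧
  ∀ i, 1 ≤ i → i ≤ n → FinSupp (w i) ∧
    (∀ k, w i (k + 1) < w i k → k < e i) ∧
    (∀ k, (w i)⁻¹ (k + 1) < (w i)⁻¹ k → k < e (i - 1))

/-- `chain w i k p = (w k)⁻¹ (⋯ ((w (i+1))⁻¹ p))` for `k ≥ i`, and `p` for `k ≤ i`. -/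
def chain (w : ℕ → Equiv.Perm ℕ) (i : ℕ) : ℕ → ℕ → ℕ
  | 0, p => p
  | k + 1, p => if k + 1 ≤ i then p else (w (k + 1))⁻¹ (chain w i k p)

/-- The rank conditions of a lace diagram: `rank e w i j` is the number of dots
`p < e i` of column `i` whose strand continues through column `j`. -/
noncomputable def rank (e : ℕ → ℕ) (w : ℕ → Equiv.Perm ℕ) (i j : ℕ) : ℕ :=
  {p : ℕ | p < e i ∧ ∀ k, i < k → k ≤ j → chain w i k p < e k}.ncard

/-- The lace diagram `w` has rank conditions `r` (for `0 ≤ i ≤ j ≤ n`). -/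
def RankEq (n : ℕ) (e : ℕ → ℕ) (w : ℕ → Equiv.Perm ℕ) (r : ℕ → ℕ → ℕ) : Prop :=
  ∀ i j, i ≤ j → j ≤ n → rank e w i j = r i j

/-- The length of a lace diagram. -/
noncomputable def diagLength (n : ℕ) (w : ℕ → Equiv.Perm ℕ) : ℕ :=
  ∑ i ∈ Finset.Icc 1 n, ell (w i)

/-- The expected codimension `d(r)`. -/
def codim (n : ℕ) (r : ℕ → ℕ → ℕ) : ℕ :=
  ∑ i ∈ Finset.range (n + 1), ∑ j ∈ Finset.range (n + 1),
    if i < j then (r i (j - 1) - r i j) * (r (i + 1) j - r i j) else 0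

/-- A minimal lace diagram: its length equals the expected codimension of its
rank conditions. -/
def IsMinimal (n : ℕ) (e : ℕ → ℕ) (w : ℕ → Equiv.Perm ℕ) : Prop :=
  IsLace n e w ∧ diagLength n w = codim n (rank e w)

/-- The longest element of `S m` (0-indexed), as a permutation of ℕ. -/
def longest (m : ℕ) : Equiv.Perm ℕ where
  toFun i := if i < m then m - 1 - i else i
  invFun i := if i < m then m - 1 - i else i
  left_inv i := by dsimp only; split_ifs <;> omega
  right_inv i := by dsimp only; split_ifs <;> omega

/-- Interchanging the x-variables `x (i+1)` and `x (i+2)` (0-indexed: `inl i`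
and `inl (i+1)`). -/
noncomputable def sX (i : ℕ) (f : MvPolynomial (ℕ ⊕ ℕ) ℤ) : MvPolynomial (ℕ ⊕ ℕ) ℤ :=
  rename (Sum.map (Equiv.swap i (i + 1)) id) f

/-- `S` is the family of double Schubert polynomials `S w = 𝔖_w(x; y)`:
it takes the prescribed product value on each longest element, it satisfies the
divided difference recursion `(x i - x (i+1)) * S (w * s i) = S w - (S w)^{s i}`
when `w` has a descent at `i` and `(S w)^{s i} = S w` otherwise, and only the
variables up to the last descents of `w` and `w⁻¹` occur in `S w`. -/
def IsSchubertFamily (S : Equiv.Perm ℕ → MvPolynomial (ℕ ⊕ ℕ) ℤ) : Prop :=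
  (∀ m : ℕ, S (longest m) =
      ∏ i ∈ Finset.range m, ∏ j ∈ Finset.range m,
        if i + j + 2 ≤ m then X (Sum.inl i) - X (Sum.inr j) else 1) ∧
  (∀ w : Equiv.Perm ℕ, FinSupp w → ∀ i : ℕ,
    (w (i + 1) < w i →
      (X (Sum.inl i) - X (Sum.inl (i + 1))) * S (w * Equiv.swap i (i + 1)) =
        S w - sX i (S w)) ∧
    (w i < w (i + 1) → sX i (S w) = S w)) ∧
  (∀ w : Equiv.Perm ℕ, FinSupp w → ∀ k l : ℕ,
    (∀ t, k ≤ t → ¬w (t + 1) < w t) → (∀ t, l ≤ t → ¬w⁻¹ (t + 1) < w⁻¹ t) →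
    ∀ v ∈ (S w).vars, (∃ a < k, v = Sum.inl a) ∨ (∃ b < l, v = Sum.inr b))

/-- The product `S(w) = 𝔖_{w 1}(x^1;x^0) ⋯ 𝔖_{w n}(x^n;x^{n-1})`, in the
variables `(i, j) = x^i_{j+1}`. -/
noncomputable def Sprod (n : ℕ) (S : Equiv.Perm ℕ → MvPolynomial (ℕ ⊕ ℕ) ℤ)
    (w : ℕ → Equiv.Perm ℕ) : MvPolynomial (ℕ × ℕ) ℤ :=
  ∏ i ∈ Finset.Icc 1 n,
    rename (Sum.elim (fun a => (i, a)) (fun b => (i - 1, b))) (S (w i))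

/-- The component-formula polynomial `Q_r`: the sum of `Sprod n S w` over all
minimal lace diagrams `w` with rank conditions `r`. -/
noncomputable def Qpoly (n : ℕ) (e : ℕ → ℕ) (r : ℕ → ℕ → ℕ)
    (S : Equiv.Perm ℕ → MvPolynomial (ℕ ⊕ ℕ) ℤ) : MvPolynomial (ℕ × ℕ) ℤ :=
  ∑ᶠ (w : ℕ → Equiv.Perm ℕ) (_ : IsMinimal n e w ∧ RankEq n e w r), Sprod n S w

/-- The shifted permutation `1^k × w`: fixes `0, …, k-1` (0-indexed) and sends
`k + j` to `k + w j`. -/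
def shiftPerm (k : ℕ) (w : Equiv.Perm ℕ) : Equiv.Perm ℕ where
  toFun j := if j < k then j else w (j - k) + k
  invFun j := if j < k then j else w⁻¹ (j - k) + k
  left_inv j := by
    dsimp only
    by_cases h : j < k
    · simp [h]
    · have h1 : ¬ w (j - k) + k < k := by omega
      simp only [if_neg h, if_neg h1, Nat.add_sub_cancel, Equiv.Perm.coe_inv, Equiv.symm_apply_apply]
      omega
  right_inv j := by
    dsimp only
    by_cases h : j < k
    · simp [h]
    · have h1 : ¬ w⁻¹ (j - k) + k < k := by omega
      simp only [if_neg h, if_neg h1, Nat.add_sub_cancel]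
      simp only [Equiv.Perm.coe_inv, Equiv.apply_symm_apply]
      omega

/-- The lace diagram `(1^k × w 1, …, 1^k × w n)`. -/
def shiftDiag (k : ℕ) (w : ℕ → Equiv.Perm ℕ) : ℕ → Equiv.Perm ℕ :=
  fun i => shiftPerm k (w i)

/-- The transformation of lace diagrams, allowed at `(i, j)` (0-indexed `j`,
so `j + 1 < e i`) when exactly one of the two descent conditions holds; it
replaces `w i` by `w i * s j` and `w (i+1)` by `s j * w (i+1)`. -/
def TransStep (n : ℕ) (e : ℕ → ℕ) (w w' : ℕ → Equiv.Perm ℕ) : Prop :=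
  IsLace n e w ∧ ∃ i j, 1 ≤ i ∧ i + 1 ≤ n ∧ j + 1 < e i ∧
    Xor' (w i (j + 1) < w i j) ((w (i + 1))⁻¹ (j + 1) < (w (i + 1))⁻¹ j) ∧
    w' = Function.update (Function.update w i (w i * Equiv.swap j (j + 1))) (i + 1)
          (Equiv.swap j (j + 1) * w (i + 1))

/-- The column where the strand through dot `q` of column `c` starts. -/
def startCol (e : ℕ → ℕ) (w : ℕ → Equiv.Perm ℕ) : ℕ → ℕ → ℕ
  | 0, _ => 0
  | c + 1, q => if w (c + 1) q < e c then startCol e w c (w (c + 1) q) else c + 1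

/-- The starting dot `(column, position)` of the strand through dot `q` of column `c`. -/
def startDot (e : ℕ → ℕ) (w : ℕ → Equiv.Perm ℕ) : ℕ → ℕ → ℕ × ℕ
  | 0, q => (0, q)
  | c + 1, q => if w (c + 1) q < e c then startDot e w c (w (c + 1) q) else (c + 1, q)

def endColAux (e : ℕ → ℕ) (w : ℕ → Equiv.Perm ℕ) : ℕ → ℕ → ℕ → ℕ
  | 0, c, _ => c
  | f + 1, c, q =>
      if (w (c + 1))⁻¹ q < e (c + 1) then endColAux e w f (c + 1) ((w (c + 1))⁻¹ q) else c

/-- The column where the strand through dot `q` of column `c` terminates. -/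
def endCol (n : ℕ) (e : ℕ → ℕ) (w : ℕ → Equiv.Perm ℕ) (c q : ℕ) : ℕ :=
  endColAux e w (n - c) c q

/-- `w` is the left-most lace diagram (for its rank conditions): it is a lace
diagram such that in every column the strands are sorted from top to bottom by
starting column (ascending) and then by terminating column (descending), exactly
as produced by the construction which adds, for `i = 0, …, n` and `j = n, …, i`,
all strands from column `i` to column `j` to the bottom of the diagram; and
strands with the same start and end do not cross. -/
def IsLeftmost (n : ℕ) (e : ℕ → ℕ) (w : ℕ → Equiv.Perm ℕ) : Prop :=
  IsLace n e w ∧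
  (∀ c, c ≤ n → ∀ q q', q < q' → q' < e c →
    startCol e w c q < startCol e w c q' ∨
      (startCol e w c q = startCol e w c q' ∧ endCol n e w c q' ≤ endCol n e w c q)) ∧
  (∀ c, 1 ≤ c → c ≤ n → ∀ q q', q < q' → q' < e c →
    startCol e w c q = startCol e w c q' → endCol n e w c q = endCol n e w c q' →
    w c q < w c q')

/-- The substitution homomorphism `φ_u` of a lace diagram `u`: it sends the
variable `x^i_j` to the variable `b_S` of the strand `S` of `u` through dot
`(i, j)`, where the strand variables are realized as the variables indexed by
the starting dots of strands. -/
noncomputable def phiMap (e : ℕ → ℕ) (u : ℕ → Equiv.Perm ℕ) :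
    MvPolynomial (ℕ × ℕ) ℤ →ₐ[ℤ] MvPolynomial (ℕ × ℕ) ℤ :=
  rename fun p => startDot e u p.1 p.2

/-- The product of the simple transpositions `s (i+1)` (1-indexed) for `i` in `l`. -/
def wordProd (l : List ℕ) : Equiv.Perm ℕ := (l.map fun i => Equiv.swap i (i + 1)).prod

/-- A reduced word for a finitely supported permutation of ℕ. -/
def IsReducedWord (u : Equiv.Perm ℕ) (l : List ℕ) : Prop :=
  wordProd l = u ∧ l.length = ell u

/-- Bruhat order: some reduced word for `u` contains a subword which is a
reduced word for `w`. -/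
def BruhatLE (w u : Equiv.Perm ℕ) : Prop :=
  ∃ l l', IsReducedWord u l ∧ IsReducedWord w l' ∧ l'.Sublist l

theorem FinSupp.of_apply_eq_self_of_le {w : Equiv.Perm ℕ} {m : ℕ}
    (hw : ∀ t, m ≤ t → w t = t) : FinSupp w :=
  (Set.finite_Iio m).subset fun x hx => not_le.mp fun hxm => hx (hw x hxm)

theorem FinSupp.mul_swap {w : Equiv.Perm ℕ} (hw : FinSupp w) (a b : ℕ) :
    FinSupp (w * Equiv.swap a b) := by
  refine (hw.union (Set.toFinite {a, b})).subset fun x hx => ?_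
  by_cases hab : x = a ∨ x = b
  · exact Or.inr hab
  · rw [not_or] at hab
    left
    simpa [Equiv.swap_apply_of_ne_of_ne hab.1 hab.2] using hx

/-- The divided difference recursion applied to `w * s i`, which has a descent at `i`. -/
theorem IsSchubertFamily.sub_mul_eq_sub_sX {S : Equiv.Perm ℕ → MvPolynomial (ℕ ⊕ ℕ) ℤ}
    (hS : IsSchubertFamily S) {w : Equiv.Perm ℕ} (hw : FinSupp w) {i : ℕ}
    (hwi : w i < w (i + 1)) :
    (X (Sum.inl i) - X (Sum.inl (i + 1))) * S w =
      S (w * Equiv.swap i (i + 1)) - sX i (S (w * Equiv.swap i (i + 1))) := by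
  have hdesc : (w * Equiv.swap i (i + 1)) (i + 1) < (w * Equiv.swap i (i + 1)) i := by
    simpa [Equiv.Perm.mul_apply] using hwi
  simpa [mul_assoc] using (hS.2.1 _ (hw.mul_swap i (i + 1)) i).1 hdesc

theorem IsSchubertFamily.sub_mul_aeval_eq {S : Equiv.Perm ℕ → MvPolynomial (ℕ ⊕ ℕ) ℤ}
    (hS : IsSchubertFamily S) {w : Equiv.Perm ℕ} (hw : FinSupp w) {i : ℕ}
    (hwi : w i < w (i + 1)) {A : Type*} [CommRing A] (f : ℕ ⊕ ℕ → A) :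
    (f (Sum.inl (i + 1)) - f (Sum.inl i)) * aeval f (S w) =
      aeval (f ∘ Sum.map (Equiv.swap i (i + 1)) id) (S (w * Equiv.swap i (i + 1))) -
        aeval f (S (w * Equiv.swap i (i + 1))) := by
  have h := congrArg (aeval f) (hS.sub_mul_eq_sub_sX hw hwi)
  simp only [map_mul, map_sub, aeval_X, sX, aeval_rename] at h
  linear_combination -h

theorem schubert_specialization_recursion_general
    (S : Equiv.Perm ℕ → MvPolynomial (ℕ ⊕ ℕ) ℤ) (hS : IsSchubertFamily S)
    (m : ℕ) (u w : Equiv.Perm ℕ)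
    (hw : ∀ t, m ≤ t → w t = t)
    (i : ℕ) (hwi : w i < w (i + 1)) :
    (X (u (i + 1)) - X (u i)) *
        aeval (Sum.elim (fun a => (X (u a) : MvPolynomial ℕ ℤ)) (fun b => X b)) (S w) =
      aeval (Sum.elim (fun a => (X ((u * Equiv.swap i (i + 1)) a) : MvPolynomial ℕ ℤ))
          (fun b => X b)) (S (w * Equiv.swap i (i + 1))) -
      aeval (Sum.elim (fun a => (X (u a) : MvPolynomial ℕ ℤ)) (fun b => X b))
        (S (w * Equiv.swap i (i + 1))) := by
  have hσ : Sum.elim (fun a => (X (u a) : MvPolynomial ℕ ℤ)) (fun b => X b) ∘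
      Sum.map (Equiv.swap i (i + 1)) id =
        Sum.elim (fun a => X ((u * Equiv.swap i (i + 1)) a)) (fun b => X b) := by
    rw [Sum.elim_comp_map]
    rfl
  have h := hS.sub_mul_aeval_eq (FinSupp.of_apply_eq_self_of_le hw) hwi
    (Sum.elim (fun a => (X (u a) : MvPolynomial ℕ ℤ)) (fun b => X b))
  rwa [hσ] at h

/-- for `u, w ∈ S m` and `i` with `i + 1 < m` (0-indexed) and
`w i < w (i+1)`, one has
`(b_{u(i+1)} - b_{u(i)}) ⬝ 𝔖_w(b_u; b) = 𝔖_{w s_i}(b_{u s_i}; b) - 𝔖_{w s_i}(b_u; b)`. -/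
theorem schubert_specialization_recursion
    (S : Equiv.Perm ℕ → MvPolynomial (ℕ ⊕ ℕ) ℤ) (hS : IsSchubertFamily S)
    (m : ℕ) (u w : Equiv.Perm ℕ)
    (hu : ∀ t, m ≤ t → u t = t) (hw : ∀ t, m ≤ t → w t = t)
    (i : ℕ) (him : i + 1 < m) (hwi : w i < w (i + 1)) :
    (X (u (i + 1)) - X (u i)) *
        aeval (Sum.elim (fun a => (X (u a) : MvPolynomial ℕ ℤ)) (fun b => X b)) (S w) =
      aeval (Sum.elim (fun a => (X ((u * Equiv.swap i (i + 1)) a) : MvPolynomial ℕ ℤ))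
          (fun b => X b)) (S (w * Equiv.swap i (i + 1))) -
      aeval (Sum.elim (fun a => (X (u a) : MvPolynomial ℕ ℤ)) (fun b => X b))
        (S (w * Equiv.swap i (i + 1))) :=
  schubert_specialization_recursion_general S hS m u w hw i hwi
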